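/- Let S be a finite set, and for each v ∈ S let ε_v, δ_v ∈ [0,1) with δ_v < 1. Set s = |S|, ε = (1/s)∑ ε_v, δ = (1/s)∑ δ_v, and assume ε < 1. Then ∑_{v∈S}(1-ε_v)·log(1/(1-δ_v)) ≥ (1-ε)·s·log((1-ε)/(1-δ)). -/
import Mathlib


open Finset Real

/-- Jensen step: for a nonempty finite set `S` of size `s`, weights `ε_v ∈ [0,1]`,
`δ_v ∈ [0,1)`, averages `ε < 1` and `δ`, we have
`∑ (1-ε_v) log(1/(1-δ_v)) ≥ (1-ε) s log((1-ε)/(1-δ))` for any base `b > 1`. -/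
theorem stmt_3 {V : Type*} (S : Finset V) (hS : S.Nonempty)
    (b : ℝ) (hb : 1 < b) (ε δ : V → ℝ) (s : ℝ) (hs : s = S.card)
    (hε0 : ∀ v ∈ S, 0 ≤ ε v) (hε1 : ∀ v ∈ S, ε v ≤ 1)
    (hδ0 : ∀ v ∈ S, 0 ≤ δ v) (hδ1 : ∀ v ∈ S, δ v < 1)
    (εbar δbar : ℝ) (hεbar : εbar = (1 / s) * ∑ v ∈ S, ε v)
    (hδbar : δbar = (1 / s) * ∑ v ∈ S, δ v) (hεlt : εbar < 1) :
    ∑ v ∈ S, (1 - ε v) * Real.logb b (1 / (1 - δ v))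
      ≥ (1 - εbar) * s * Real.logb b ((1 - εbar) / (1 - δbar)) := by
  have hs0 : 0 < s := by
    rw [hs]; exact_mod_cast Finset.card_pos.mpr hS
  set a : V → ℝ := fun v => 1 - ε v with ha
  have ha0 : ∀ v ∈ S, 0 ≤ a v := fun v hv => by simp [ha]; exact hε1 v hv
  have ha1 : ∀ v ∈ S, a v ≤ 1 := fun v hv => by simp [ha]; exact hε0 v hv
  have hsumε : ∑ v ∈ S, ε v = s * εbar := by
    rw [hεbar]; field_simp
  have hsumδ : ∑ v ∈ S, δ v = s * δbar := by
    rw [hδbar]; field_simp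
  set A : ℝ := ∑ v ∈ S, a v with hA
  have hAval : A = s * (1 - εbar) := by
    simp only [hA, ha, Finset.sum_sub_distrib, Finset.sum_const, nsmul_eq_mul, hsumε, ← hs]
    ring
  have hApos : 0 < A := by
    rw [hAval]; exact mul_pos hs0 (by linarith)
  have hδbar1 : δbar < 1 := by
    have : ∑ v ∈ S, δ v < ∑ v ∈ S, (1 : ℝ) :=
      Finset.sum_lt_sum_of_nonempty hS hδ1
    simp only [Finset.sum_const, nsmul_eq_mul, mul_one, ← hs] at this
    rw [hsumδ] at this
    nlinarith
  -- key Jensen step with weights a v / A on points (1 - δ v)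
  set T : ℝ := ∑ v ∈ S, a v * (1 - δ v) with hT
  have hTpos : 0 < T := by
    obtain ⟨v₀, hv₀, hav₀⟩ : ∃ v ∈ S, 0 < a v := by
      by_contra h
      push_neg at h
      have : A ≤ 0 := Finset.sum_nonpos (fun v hv => h v hv)
      linarith
    refine Finset.sum_pos' (fun v hv => mul_nonneg (ha0 v hv) (by linarith [hδ1 v hv])) ⟨v₀, hv₀, ?_⟩
    exact mul_pos hav₀ (by linarith [hδ1 v₀ hv₀])
  have hw1 : ∑ v ∈ S, a v / A = 1 := by
    rw [← Finset.sum_div, ← hA]; field_simp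
  have jensen : ∑ v ∈ S, (a v / A) * Real.log (1 - δ v) ≤ Real.log (T / A) := by
    have hj := (strictConcaveOn_log_Ioi.concaveOn).le_map_sum
      (t := S) (w := fun v => a v / A) (p := fun v => 1 - δ v)
      (fun v hv => div_nonneg (ha0 v hv) hApos.le)
      hw1
      (fun v hv => by simp only [Set.mem_Ioi]; linarith [hδ1 v hv])
    simp only [smul_eq_mul] at hj
    have harg : ∑ v ∈ S, a v / A * (1 - δ v) = T / A := by
      simp only [hT, Finset.sum_div]
      refine Finset.sum_congr rfl fun v hv => ?_
      ring
    rwa [harg] at hj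
  have hTle : T ≤ s * (1 - δbar) := by
    have h1 : T ≤ ∑ v ∈ S, (1 - δ v) := by
      refine Finset.sum_le_sum fun v hv => ?_
      have := ha1 v hv
      nlinarith [hδ1 v hv, ha0 v hv]
    have h2 : ∑ v ∈ S, (1 - δ v) = s * (1 - δbar) := by
      simp only [Finset.sum_sub_distrib, Finset.sum_const, nsmul_eq_mul, mul_one, hsumδ, ← hs]
      ring
    linarith
  have hlog2 : Real.log (T / A) ≤ Real.log ((1 - δbar) / (1 - εbar)) := by
    apply Real.log_le_log (div_pos hTpos hApos)
    rw [div_le_div_iff₀ hApos (by linarith), hAval]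
    nlinarith
  have key : ∑ v ∈ S, a v * Real.log (1 - δ v) ≤ A * Real.log ((1 - δbar) / (1 - εbar)) := by
    have h3 : ∑ v ∈ S, a v * Real.log (1 - δ v) ≤ A * Real.log (T / A) := by
      have := mul_le_mul_of_nonneg_left jensen hApos.le
      rw [Finset.mul_sum] at this
      calc ∑ v ∈ S, a v * Real.log (1 - δ v)
          = ∑ v ∈ S, A * ((a v / A) * Real.log (1 - δ v)) := by
            refine Finset.sum_congr rfl fun v hv => ?_
            field_simp
        _ ≤ A * Real.log (T / A) := this
    have := mul_le_mul_of_nonneg_left hlog2 hApos.le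
    linarith
  have hlogb : 0 < Real.log b := Real.log_pos hb
  -- now rewrite logb as log / log b
  have hrw : ∀ v ∈ S, (1 - ε v) * Real.logb b (1 / (1 - δ v))
      = a v * (-Real.log (1 - δ v)) / Real.log b := by
    intro v hv
    rw [Real.logb, Real.log_div one_ne_zero (by linarith [hδ1 v hv] : (1 : ℝ) - δ v ≠ 0)]
    simp [ha]; ring
  rw [Finset.sum_congr rfl hrw, ← Finset.sum_div]
  have hRHS : (1 - εbar) * s * Real.logb b ((1 - εbar) / (1 - δbar))
      = A * (-Real.log ((1 - δbar) / (1 - εbar))) / Real.log b := by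
    rw [Real.logb, ← Real.log_inv]
    rw [inv_div, hAval]
    ring
  rw [hRHS, ge_iff_le, div_le_div_iff_of_pos_right hlogb]
  have : ∑ v ∈ S, a v * (-Real.log (1 - δ v))
      = -(∑ v ∈ S, a v * Real.log (1 - δ v)) := by
    rw [← Finset.sum_neg_distrib]; congr 1; ext v; ring
  rw [this]
  linarith
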